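/- If Ω is a nonzero positive semidefinite stress matrix of framework (G,p), and (G,p') is any framework equivalent to (G,p) (with centroid at the origin), then Ω is also a stress matrix of (G,p'), i.e., ΩP' = 0 where P' is the configuration matrix of (G,p'). -/

import Mathlib

open Matrix BigOperators

/-! The stress energy `∑ᵢⱼ Ωᵢⱼ ‖pᵢ - pⱼ‖²` of a symmetric Ω with zero row sums equals
`-2 tr(PᵀΩP)`, and when Ω is supported on the edges of `G` it only sees edge lengths. It thus
vanishes on the equivalent framework `P'` because it vanishes on `P`, and for positive
semidefinite Ω, `tr(P'ᵀΩP') = 0` forces `ΩP' = 0`. -/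

open scoped MatrixOrder ComplexOrder in
theorem Matrix.PosSemidef.trace_conjTranspose_mul_mul_same_eq_zero_iff
    {m n 𝕜 : Type*} [Fintype m] [Fintype n] [RCLike 𝕜] {A : Matrix n n 𝕜}
    (hA : A.PosSemidef) (B : Matrix n m 𝕜) : (Bᴴ * A * B).trace = 0 ↔ A * B = 0 := by
  classical
  obtain ⟨C, rfl⟩ := CStarAlgebra.nonneg_iff_eq_star_mul_self.mp hA.nonneg
  rw [star_eq_conjTranspose]
  refine ⟨fun h => ?_, fun h => by rw [Matrix.mul_assoc, h, Matrix.mul_zero, trace_zero]⟩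
  have hCB : C * B = 0 := by
    rw [← trace_conjTranspose_mul_self_eq_zero_iff, conjTranspose_mul]
    simpa only [Matrix.mul_assoc] using h
  rw [Matrix.mul_assoc, hCB, Matrix.mul_zero]

section Stress

variable {ι R : Type*} [Fintype ι] [CommRing R] {Ω : Matrix ι ι R}

theorem Matrix.IsSymm.sum_mul_sub_sq (hΩ : Ω.IsSymm)
    (hΩe : Ω *ᵥ (fun _ => 1) = 0) (v : ι → R) :
    ∑ i, ∑ j, Ω i j * (v i - v j) ^ 2 = -2 * (v ⬝ᵥ Ω *ᵥ v) := by
  have hrow : ∀ i, ∑ j, Ω i j = 0 := fun i => by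
    simpa [mulVec, dotProduct] using congrFun hΩe i
  have hcol : ∀ j, ∑ i, Ω i j = 0 := fun j => by
    simpa only [hΩ.apply] using hrow j
  calc ∑ i, ∑ j, Ω i j * (v i - v j) ^ 2
      = ∑ i, ∑ j, (v i ^ 2 * Ω i j + v j ^ 2 * Ω i j - 2 * (v i * (Ω i j * v j))) :=
        Finset.sum_congr rfl fun i _ => Finset.sum_congr rfl fun j _ => by ring
    _ = ∑ i, v i ^ 2 * ∑ j, Ω i j + ∑ j, v j ^ 2 * ∑ i, Ω i j - 2 * (v ⬝ᵥ Ω *ᵥ v) := by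
        simp only [Finset.sum_add_distrib, Finset.sum_sub_distrib, Finset.mul_sum, dotProduct,
          mulVec]
        rw [Finset.sum_comm (γ := ι) (f := fun i j => v j ^ 2 * Ω i j)]
    _ = -2 * (v ⬝ᵥ Ω *ᵥ v) := by simp [hrow, hcol]

def stressEnergy {κ : Type*} [Fintype κ] (Ω : Matrix ι ι R) (Q : Matrix ι κ R) : R :=
  ∑ i, ∑ j, Ω i j * ∑ t, (Q i t - Q j t) ^ 2

theorem stressEnergy_eq_neg_two_mul_trace {κ : Type*} [Fintype κ]
    (hΩ : Ω.IsSymm) (hΩe : Ω *ᵥ (fun _ => 1) = 0) (Q : Matrix ι κ R) :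
    stressEnergy Ω Q = -2 * (Qᵀ * Ω * Q).trace := by
  have htrace : (Qᵀ * Ω * Q).trace = ∑ t, Qᵀ t ⬝ᵥ Ω *ᵥ Qᵀ t := by
    simp only [trace, diag, mul_apply, dotProduct, mulVec, transpose_apply, Finset.mul_sum,
      Finset.sum_mul]
    refine Finset.sum_congr rfl fun t _ => ?_
    rw [Finset.sum_comm]
    simp only [mul_assoc]
  rw [htrace, Finset.mul_sum, stressEnergy]
  simp only [← hΩ.sum_mul_sub_sq hΩe, Finset.mul_sum, transpose_apply]
  exact (Finset.sum_congr rfl fun _ _ => Finset.sum_comm).trans Finset.sum_comm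

theorem stressEnergy_eq_of_adj {κ κ' : Type*} [Fintype κ] [Fintype κ'] (G : SimpleGraph ι)
    (hΩG : ∀ i j, i ≠ j → ¬ G.Adj i j → Ω i j = 0) {Q : Matrix ι κ R} {Q' : Matrix ι κ' R}
    (hQ : ∀ i j, G.Adj i j → ∑ t, (Q' i t - Q' j t) ^ 2 = ∑ t, (Q i t - Q j t) ^ 2) :
    stressEnergy Ω Q' = stressEnergy Ω Q := by
  refine Finset.sum_congr rfl fun i _ => Finset.sum_congr rfl fun j _ => ?_
  by_cases hij : i = j
  · simp [hij]
  by_cases hadj : G.Adj i j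
  · rw [hQ i j hadj]
  · simp [hΩG i j hij hadj]

end Stress

theorem stmt16 (n r s : ℕ) (G : SimpleGraph (Fin n))
    (P : Matrix (Fin n) (Fin r) ℝ)
    (Ω : Matrix (Fin n) (Fin n) ℝ)
    (hΩsym : Ω.IsSymm) (hΩP : Ω * P = 0) (hΩe : Ω *ᵥ (fun _ => (1 : ℝ)) = 0)
    (hΩmiss : ∀ i j, i ≠ j → ¬ G.Adj i j → Ω i j = 0)
    (hΩpsd : Ω.PosSemidef)
    (P' : Matrix (Fin n) (Fin s) ℝ)
    (hequiv : ∀ i j, G.Adj i j →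
      ∑ t, (P' i t - P' j t) ^ 2 = ∑ t, (P i t - P j t) ^ 2) :
    Ω * P' = 0 := by
  have hE := stressEnergy_eq_of_adj G hΩmiss hequiv
  rw [stressEnergy_eq_neg_two_mul_trace hΩsym hΩe, stressEnergy_eq_neg_two_mul_trace hΩsym hΩe,
    Matrix.mul_assoc Pᵀ, hΩP, Matrix.mul_zero, trace_zero, mul_zero, mul_eq_zero] at hE
  rw [← hΩpsd.trace_conjTranspose_mul_mul_same_eq_zero_iff, conjTranspose_eq_transpose_of_trivial]
  exact hE.resolve_left (by norm_num)
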